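/- Let λ > 0 and suppose β : ℝ → ℝ takes positive values, is differentiable at n = 1, and satisfies the implicit equation λ^{2n} ∑_{k=1}^∞ (k+1)^{3−n} e^{−β(n)√(k(k+2))} = 1 for all n in a neighborhood of 1. Then β(1) − β′(1) = β(1) + (λ^{−2} log(λ^{−2}) + ∑_{k=1}^∞ (k+1)² log(k+1) e^{−β(1)√(k(k+2))}) / (∑_{k=1}^∞ (k+1)² √(k(k+2)) e^{−β(1)√(k(k+2))}). -/

import Mathlib

/-- The LQG area eigenvalue `E_k = √(k(k+2))` for spin `k/2`. -/
noncomputable def Ek (k : ℕ+) : ℝ :=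
  Real.sqrt (((k : ℕ) : ℝ) * (((k : ℕ) : ℝ) + 2))

/-!
Write `Z(n, b) = ∑ₖ (k+1)^{3-n} e^{-b E_k}`, treating `b = β(n)` as an independent variable.
For `n > 0` and `b > c > 0` the terms and their partial derivatives `-log(k+1)·(…)` and
`-E_k·(…)` are dominated by `2 (k+1)⁴ e^{-ck}`, so `Z` is Fréchet differentiable there, termwise.
Differentiating `λ^{2n} Z(n, β(n)) ≡ 1` at `n = 1` by the chain rule gives
`2 log λ · Z − ∑ log(k+1)(k+1)² e^{-β(1)E_k} − β'(1) ∑ E_k (k+1)² e^{-β(1)E_k} = 0`,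
and `Z(1, β(1)) = λ⁻²` turns this into the formula.
-/

open Real Set

section AreaEigenvalue

variable (k : ℕ+)

lemma Ek_pos : 0 < Ek k := by
  have hk : (1 : ℝ) ≤ (k : ℕ) := by exact_mod_cast k.pos
  exact Real.sqrt_pos.mpr (by nlinarith)

lemma natCast_le_Ek : ((k : ℕ) : ℝ) ≤ Ek k :=
  Real.le_sqrt_of_sq_le (by nlinarith [(Nat.cast_nonneg (k : ℕ) : (0 : ℝ) ≤ (k : ℕ))])

lemma Ek_le_natCast_add_two : Ek k ≤ (k : ℕ) + 2 :=
  Real.sqrt_le_iff.mpr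
    ⟨by positivity, by nlinarith [(Nat.cast_nonneg (k : ℕ) : (0 : ℝ) ≤ (k : ℕ))]⟩

lemma log_natCast_add_one_nonneg : 0 ≤ log ((k : ℕ) + 1) :=
  log_nonneg (by simp)

lemma log_add_one_add_Ek_le : log ((k : ℕ) + 1) + Ek k ≤ 2 * ((k : ℕ) + 1) := by
  have := log_le_sub_one_of_pos (show (0 : ℝ) < (k : ℕ) + 1 by positivity)
  linarith [Ek_le_natCast_add_two k]

lemma log_natCast_add_one_le : log ((k : ℕ) + 1) ≤ 2 * ((k : ℕ) + 1) := by
  linarith [log_add_one_add_Ek_le k, Ek_pos k]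

lemma Ek_le_two_mul : Ek k ≤ 2 * ((k : ℕ) + 1) := by
  linarith [log_add_one_add_Ek_le k, log_natCast_add_one_nonneg k]

end AreaEigenvalue

noncomputable def weight (k : ℕ+) (p : ℝ × ℝ) : ℝ :=
  (((k : ℕ) : ℝ) + 1) ^ (3 - p.1) * exp (-p.2 * Ek k)

noncomputable def partitionFn (p : ℝ × ℝ) : ℝ := ∑' k, weight k p

noncomputable def weightFDeriv (k : ℕ+) (p : ℝ × ℝ) : ℝ × ℝ →L[ℝ] ℝ :=
  -((log ((k : ℕ) + 1) * weight k p) • ContinuousLinearMap.fst ℝ ℝ ℝ +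
    (Ek k * weight k p) • ContinuousLinearMap.snd ℝ ℝ ℝ)

lemma weight_pos (k : ℕ+) (p : ℝ × ℝ) : 0 < weight k p := by
  unfold weight; positivity

lemma weight_one (k : ℕ+) (b : ℝ) :
    weight k (1, b) = (((k : ℕ) : ℝ) + 1) ^ 2 * exp (-b * Ek k) := by
  rw [weight, show (3 : ℝ) - 1 = (2 : ℕ) by norm_num, Real.rpow_natCast]

lemma hasFDerivAt_weight (k : ℕ+) (p : ℝ × ℝ) :
    HasFDerivAt (weight k) (weightFDeriv k p) p := by
  have hpow := ((hasFDerivAt_const (3 : ℝ) p).sub hasFDerivAt_fst).const_rpow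
    (show (0 : ℝ) < (k : ℕ) + 1 by positivity)
  have hexp := ((hasFDerivAt_snd (p := p)).neg.mul_const (Ek k)).exp
  refine (hpow.mul hexp).congr_fderiv (ContinuousLinearMap.ext fun v => ?_)
  simp only [Pi.sub_apply, Pi.neg_apply, neg_mul, smul_neg, zero_sub, add_apply, neg_apply,
    smul_apply, ContinuousLinearMap.coe_snd', smul_eq_mul, ContinuousLinearMap.coe_fst',
    weightFDeriv, weight, neg_add_rev]
  ring

lemma norm_weightFDeriv_le (k : ℕ+) (p : ℝ × ℝ) :
    ‖weightFDeriv k p‖ ≤ 2 * ((k : ℕ) + 1) * weight k p := by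
  have hlog := log_natCast_add_one_nonneg k
  have hw := (weight_pos k p).le
  have hE := (Ek_pos k).le
  calc ‖weightFDeriv k p‖
      ≤ log ((k : ℕ) + 1) * weight k p + Ek k * weight k p := by
        rw [weightFDeriv, norm_neg]
        refine (norm_add_le _ _).trans (add_le_add ?_ ?_)
        · rw [norm_smul, Real.norm_of_nonneg (by positivity)]
          exact mul_le_of_le_one_right (by positivity) (ContinuousLinearMap.norm_fst_le ..)
        · rw [norm_smul, Real.norm_of_nonneg (by positivity)]
          exact mul_le_of_le_one_right (by positivity) (ContinuousLinearMap.norm_snd_le ..)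
    _ ≤ 2 * ((k : ℕ) + 1) * weight k p := by
        rw [← add_mul]; gcongr; exact log_add_one_add_Ek_le k

lemma weight_le {c : ℝ} (hc : 0 ≤ c) (k : ℕ+) {p : ℝ × ℝ} (hp₁ : 0 ≤ p.1)
    (hp₂ : c ≤ p.2) :
    weight k p ≤ (((k : ℕ) : ℝ) + 1) ^ 3 * exp (-c * (k : ℕ)) := by
  have hbase : (1 : ℝ) ≤ (k : ℕ) + 1 := by simp
  have hk : (0 : ℝ) ≤ (k : ℕ) := Nat.cast_nonneg _
  have hpow : (((k : ℕ) : ℝ) + 1) ^ (3 - p.1) ≤ (((k : ℕ) : ℝ) + 1) ^ 3 := by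
    rw [← Real.rpow_natCast]
    exact Real.rpow_le_rpow_of_exponent_le hbase (by push_cast; linarith)
  have hexp : -p.2 * Ek k ≤ -c * (k : ℕ) := by
    rw [neg_mul, neg_mul, neg_le_neg_iff]
    exact mul_le_mul hp₂ (natCast_le_Ek k) hk (hc.trans hp₂)
  exact mul_le_mul hpow (exp_le_exp.mpr hexp) (by positivity) (by positivity)

lemma summable_pow_four_mul_exp {c : ℝ} (hc : 0 < c) :
    Summable fun k : ℕ+ => (((k : ℕ) : ℝ) + 1) ^ 4 * exp (-c * (k : ℕ)) := by
  refine .of_nonneg_of_le (fun k => by positivity) (fun k => ?_)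
    (((summable_pow_mul_exp_neg_nat_mul 4 hc).comp_injective PNat.coe_injective).mul_left 16)
  have hk : (1 : ℝ) ≤ (k : ℕ) := by exact_mod_cast k.pos
  have h4 : (((k : ℕ) : ℝ) + 1) ^ 4 ≤ 16 * ((k : ℕ) : ℝ) ^ 4 := by
    calc (((k : ℕ) : ℝ) + 1) ^ 4 ≤ (2 * (k : ℕ)) ^ 4 := by gcongr; linarith
      _ = _ := by ring
  simp only [Function.comp_apply, ← mul_assoc]
  gcongr

lemma summable_mul_weight {p : ℝ × ℝ} (hp₁ : 0 ≤ p.1) (hp₂ : 0 < p.2) {a : ℕ+ → ℝ}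
    (ha₀ : ∀ k, 0 ≤ a k) (ha : ∀ k, a k ≤ 2 * ((k : ℕ) + 1)) :
    Summable fun k => a k * weight k p := by
  refine .of_nonneg_of_le (fun k => mul_nonneg (ha₀ k) (weight_pos k p).le) (fun k => ?_)
    ((summable_pow_four_mul_exp hp₂).mul_left 2)
  calc a k * weight k p
      ≤ (2 * ((k : ℕ) + 1)) * ((((k : ℕ) : ℝ) + 1) ^ 3 * exp (-p.2 * (k : ℕ))) :=
        mul_le_mul (ha k) (weight_le hp₂.le k hp₁ le_rfl) (weight_pos k p).le (by positivity)
    _ = _ := by ring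

lemma summable_weight {p : ℝ × ℝ} (hp₁ : 0 ≤ p.1) (hp₂ : 0 < p.2) :
    Summable fun k => weight k p := by
  simpa using summable_mul_weight hp₁ hp₂ (a := fun _ => 1) (fun _ => zero_le_one)
    (fun k => by linarith [(Nat.cast_nonneg (k : ℕ) : (0 : ℝ) ≤ (k : ℕ))])

lemma summable_log_mul_weight {p : ℝ × ℝ} (hp₁ : 0 ≤ p.1) (hp₂ : 0 < p.2) :
    Summable fun k : ℕ+ => log ((k : ℕ) + 1) * weight k p :=
  summable_mul_weight hp₁ hp₂ log_natCast_add_one_nonneg log_natCast_add_one_le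

lemma summable_Ek_mul_weight {p : ℝ × ℝ} (hp₁ : 0 ≤ p.1) (hp₂ : 0 < p.2) :
    Summable fun k => Ek k * weight k p :=
  summable_mul_weight hp₁ hp₂ (fun k => (Ek_pos k).le) Ek_le_two_mul

lemma hasFDerivAt_partitionFn {p : ℝ × ℝ} (hp₁ : 0 < p.1) (hp₂ : 0 < p.2) :
    HasFDerivAt partitionFn
      (-((∑' k : ℕ+, log ((k : ℕ) + 1) * weight k p) • ContinuousLinearMap.fst ℝ ℝ ℝ +
        (∑' k : ℕ+, Ek k * weight k p) • ContinuousLinearMap.snd ℝ ℝ ℝ)) p := by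
  set c := p.2 / 2
  have hc : 0 < c := by positivity
  set s := Ioi (0 : ℝ) ×ˢ Ioi c
  have hs : IsOpen s := isOpen_Ioi.prod isOpen_Ioi
  have hs' : IsPreconnected s := ((convex_Ioi 0).prod (convex_Ioi c)).isPreconnected
  have hp : p ∈ s := ⟨hp₁, half_lt_self hp₂⟩
  have hbound : ∀ k, ∀ q ∈ s,
      ‖weightFDeriv k q‖ ≤ 2 * ((((k : ℕ) : ℝ) + 1) ^ 4 * exp (-c * (k : ℕ))) := by
    intro k q hq
    calc ‖weightFDeriv k q‖ ≤ 2 * ((k : ℕ) + 1) * weight k q := norm_weightFDeriv_le k q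
      _ ≤ 2 * ((k : ℕ) + 1) * ((((k : ℕ) : ℝ) + 1) ^ 3 * exp (-c * (k : ℕ))) := by
          gcongr; exact weight_le hc.le k hq.1.le hq.2.le
      _ = _ := by ring
  have hL := summable_log_mul_weight hp₁.le hp₂
  have hE := summable_Ek_mul_weight hp₁.le hp₂
  refine (hasFDerivAt_tsum_of_isPreconnected ((summable_pow_four_mul_exp hc).mul_left 2) hs hs'
    (fun k q _ => hasFDerivAt_weight k q) hbound hp (summable_weight hp₁.le hp₂) hp).congr_fderiv
    ?_
  simp only [weightFDeriv, tsum_neg]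
  rw [(hL.smul_const _).tsum_add (hE.smul_const _), hL.tsum_smul_const, hE.tsum_smul_const]

lemma hasDerivAt_partitionFn_comp {β : ℝ → ℝ} {d x : ℝ} (hβ : HasDerivAt β d x)
    (hx : 0 < x) (hβx : 0 < β x) :
    HasDerivAt (fun n => partitionFn (n, β n))
      (-(∑' k : ℕ+, log ((k : ℕ) + 1) * weight k (x, β x)) -
        d * ∑' k : ℕ+, Ek k * weight k (x, β x)) x := by
  refine ((hasFDerivAt_partitionFn (p := (x, β x)) hx hβx).comp_hasDerivAt x
    ((hasDerivAt_id x).prodMk hβ)).congr_deriv ?_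
  simp only [neg_add_rev, add_apply, neg_apply, smul_apply, ContinuousLinearMap.coe_snd',
    smul_eq_mul, ContinuousLinearMap.coe_fst', mul_one]
  ring

/-- **The area-law coefficient `β = β(1) - ∂ₙβ(1)`.**
If `β : ℝ → ℝ` is positive, differentiable at `n = 1`, and satisfies
`λ^{2n} ∑_{k≥1} (k+1)^{3-n} e^{-β(n) E_k} = 1` near `n = 1`, then
`β(1) - β'(1) = β(1) + (λ⁻² log λ⁻² + ∑ (k+1)² log(k+1) e^{-β(1)E_k}) /
(∑ (k+1)² √(k(k+2)) e^{-β(1)E_k})`. -/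
theorem stmt18 (lam : ℝ) (hlam : 0 < lam) (β : ℝ → ℝ) (hβpos : ∀ n, 0 < β n)
    (hdiff : DifferentiableAt ℝ β 1)
    (heq : ∀ᶠ n in nhds (1 : ℝ),
      lam ^ (2 * n) *
        ∑' k : ℕ+, (((k : ℕ) : ℝ) + 1) ^ (3 - n) * Real.exp (-(β n) * Ek k) = 1) :
    β 1 - deriv β 1 =
      β 1 +
        (lam ^ (-2 : ℝ) * Real.log (lam ^ (-2 : ℝ)) +
            ∑' k : ℕ+, (((k : ℕ) : ℝ) + 1) ^ 2 * Real.log (((k : ℕ) : ℝ) + 1) *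
              Real.exp (-(β 1) * Ek k)) /
          (∑' k : ℕ+, (((k : ℕ) : ℝ) + 1) ^ 2 * Real.sqrt (((k : ℕ) : ℝ) * (((k : ℕ) : ℝ) + 2)) *
            Real.exp (-(β 1) * Ek k)) := by
  set Z := partitionFn (1, β 1)
  set SL := ∑' k : ℕ+, log ((k : ℕ) + 1) * weight k (1, β 1)
  set SE := ∑' k : ℕ+, Ek k * weight k (1, β 1)
  set d := deriv β 1
  have hZ : lam ^ (2 * 1 : ℝ) * Z = 1 := heq.self_of_nhds
  have hderiv := (((hasDerivAt_id (1 : ℝ)).const_mul 2).const_rpow hlam).mul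
    (hasDerivAt_partitionFn_comp hdiff.hasDerivAt one_pos (hβpos 1))
  have hzero := hderiv.unique ((hasDerivAt_const (1 : ℝ) (1 : ℝ)).congr_of_eventuallyEq heq)
  have hSE : 0 < SE := (summable_Ek_mul_weight zero_le_one (hβpos 1)).tsum_pos
    (fun k => (mul_pos (Ek_pos k) (weight_pos k _)).le) 1 (mul_pos (Ek_pos 1) (weight_pos 1 _))
  have hlamZ : lam ^ (-2 : ℝ) = Z := by
    rw [Real.rpow_neg hlam.le, ← mul_eq_one_iff_inv_eq₀ (by positivity), ← hZ, mul_one]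
  have hSL : ∑' k : ℕ+, (((k : ℕ) : ℝ) + 1) ^ 2 * log ((k : ℕ) + 1) * exp (-(β 1) * Ek k) = SL :=
    tsum_congr fun k => by rw [weight_one]; ring
  have hSE' : ∑' k : ℕ+, (((k : ℕ) : ℝ) + 1) ^ 2 * √((k : ℕ) * ((k : ℕ) + 2)) *
      exp (-(β 1) * Ek k) = SE :=
    tsum_congr fun k => by rw [weight_one, Ek]; ring
  rw [hSL, hSE', log_rpow hlam, hlamZ]
  simp only [id] at hzero
  field_simp
  linear_combination Z * hzero - (2 * log lam * Z - SL - d * SE) * hZ
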